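/- Let B be a commutative ring in which 2 is invertible and b ∈ GL_n(B). Then the B-algebra C = B[y, jor(y)^{-1}]/(y^2 − b) is formally étale over B: for any commutative B-algebra D and square-zero ideal I ⊆ D, any B-algebra map C → D/I lifts uniquely to a B-algebra map C → D. -/

import Mathlib

open MvPolynomial

noncomputable section

/-- `jor half b` : the determinant of the linear map `z ↦ half • (z*b + b*z)`
(Jordan multiplication by `b`, when `half` is the inverse of `2`). -/
def jor {n : ℕ} {B : Type} [CommRing B] (half : B)
    (b : Matrix (Fin n) (Fin n) B) : B :=
  LinearMap.det (half • (LinearMap.mulLeft B b + LinearMap.mulRight B b))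

/-- The generic `n × n` matrix `y` of indeterminates. -/
def Ymat (B : Type) [CommRing B] (n : ℕ) :
    Matrix (Fin n) (Fin n) (MvPolynomial (Fin n × Fin n) B) :=
  Matrix.of fun i j => X (i, j)

/-- `jor(y)` for the generic matrix of indeterminates. -/
def jorY (B : Type) [CommRing B] (half : B) (n : ℕ) : MvPolynomial (Fin n × Fin n) B :=
  jor (C half) (Ymat B n)

/-- `B[y, jor(y)⁻¹]`. -/
abbrev Caway (B : Type) [CommRing B] (half : B) (n : ℕ) :=
  Localization.Away (jorY B half n)

/-- The ideal of `B[y, jor(y)⁻¹]` generated by the entries of `y² − b`. -/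
def relIdeal (B : Type) [CommRing B] (half : B) (n : ℕ)
    (b : Matrix (Fin n) (Fin n) B) : Ideal (Caway B half n) :=
  Ideal.span (Set.range fun ij : Fin n × Fin n =>
    (((Ymat B n).map (algebraMap (MvPolynomial (Fin n × Fin n) B) (Caway B half n))) ^ 2
      - b.map (algebraMap B (Caway B half n))) ij.1 ij.2)

/-- `C = B[y, jor(y)⁻¹]/(y² − b)`. -/
abbrev Cquot (B : Type) [CommRing B] (half : B) (n : ℕ)
    (b : Matrix (Fin n) (Fin n) B) :=
  Caway B half n ⧸ relIdeal B half n b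

/-!
A `B`-algebra map `C → R` is the same as a matrix `y` over `R` with `y² = b` and `jor(y)`
invertible, naturally in `R`. So it suffices that reduction modulo a square-zero ideal `I` is
a bijection on such matrices. As `2` is invertible, `jor(y)` is up to a unit the determinant
of the Jordan operator `z ↦ yz + zy`, the derivative of `y ↦ y²`. If `δ ≡ 0 mod I` then
`(y + δ)² = y² + (yδ + δy)`, so a lift `y₀` of a solution is corrected by the unique `δ`
with `y₀δ + δy₀ = b - y₀²` (one step of Newton's method), and two solutions congruent
mod `I` differ by a `δ` with `yδ + δy = 0`, hence `δ = 0`.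
-/

section Jordan

variable {n : ℕ} {R S : Type} [CommRing R] [CommRing S]

theorem Matrix.stdBasis_repr_apply {m l : Type} [Fintype m] [Finite l]
    (M : Matrix m l R) (p : m × l) : (Matrix.stdBasis R m l).repr M p = M p.1 p.2 := by
  simp [Matrix.stdBasis]

theorem jor_map (φ : R →+* S) (h : R) (y : Matrix (Fin n) (Fin n) R) :
    φ (jor h y) = jor (φ h) (y.map φ) := by
  rw [jor, jor, ← LinearMap.det_toMatrix (Matrix.stdBasis R (Fin n) (Fin n)),
    ← LinearMap.det_toMatrix (Matrix.stdBasis S (Fin n) (Fin n)), RingHom.map_det]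
  congr 1
  ext ⟨i, j⟩ ⟨k, l⟩
  simp only [RingHom.mapMatrix_apply, Matrix.map_apply, LinearMap.toMatrix_apply,
    Matrix.stdBasis_repr_apply, Matrix.stdBasis_eq_single, LinearMap.smul_apply,
    LinearMap.add_apply, LinearMap.mulLeft_apply, LinearMap.mulRight_apply, Matrix.smul_apply,
    Matrix.add_apply, Matrix.mul_apply, smul_eq_mul]
  simp [Matrix.single, apply_ite φ]

theorem injective_jordan {h : R} {y : Matrix (Fin n) (Fin n) R} (hy : IsUnit (jor h y)) :
    Function.Injective fun z => y * z + z * y := by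
  rw [jor, ← LinearMap.isUnit_iff_isUnit_det] at hy
  intro z₁ z₂ (hz : y * z₁ + z₁ * y = y * z₂ + z₂ * y)
  refine ((Module.End.isUnit_iff _).mp hy).1 ?_
  simp only [LinearMap.smul_apply, LinearMap.add_apply, LinearMap.mulLeft_apply,
    LinearMap.mulRight_apply]
  rw [hz]

theorem surjective_jordan {h : R} (hh : IsUnit h) {y : Matrix (Fin n) (Fin n) R}
    (hy : IsUnit (jor h y)) : Function.Surjective fun z => y * z + z * y := by
  rw [jor, ← LinearMap.isUnit_iff_isUnit_det] at hy
  intro w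
  obtain ⟨z, hz⟩ := ((Module.End.isUnit_iff _).mp hy).2 (h • w)
  exact ⟨z, hh.smul_left_cancel.mp hz⟩

end Jordan

section SquareRoots

variable {n : ℕ} {R S : Type} [CommRing R] [CommRing S]

def jorSqrt (h : R) (c : Matrix (Fin n) (Fin n) R) : Set (Matrix (Fin n) (Fin n) R) :=
  {y | y ^ 2 = c ∧ IsUnit (jor h y)}

theorem mapsTo_map_jorSqrt (φ : R →+* S) (h : R) (c : Matrix (Fin n) (Fin n) R) :
    Set.MapsTo (fun y => y.map φ) (jorSqrt h c) (jorSqrt (φ h) (c.map φ)) := by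
  rintro y ⟨hsq, hu⟩
  exact ⟨by rw [← Matrix.map_pow, hsq], jor_map φ h y ▸ hu.map φ⟩

variable {I : Ideal R}

theorem mul_eq_zero_of_map_mk_eq_zero (hI : I ^ 2 = ⊥) {M N : Matrix (Fin n) (Fin n) R}
    (hM : M.map (Ideal.Quotient.mk I) = 0) (hN : N.map (Ideal.Quotient.mk I) = 0) :
    M * N = 0 := by
  ext i j
  rw [Matrix.mul_apply, Matrix.zero_apply]
  refine Finset.sum_eq_zero fun k _ => ?_
  have hMik : M i k ∈ I := Ideal.Quotient.eq_zero_iff_mem.mp (congrFun₂ hM i k)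
  have hNkj : N k j ∈ I := Ideal.Quotient.eq_zero_iff_mem.mp (congrFun₂ hN k j)
  have hprod : M i k * N k j ∈ I ^ 2 := sq I ▸ Ideal.mul_mem_mul hMik hNkj
  rwa [hI, Ideal.mem_bot] at hprod

theorem isUnit_jor_of_map_mk (hI : I ^ 2 = ⊥) {h : R} {y : Matrix (Fin n) (Fin n) R}
    (hy : IsUnit (jor (Ideal.Quotient.mk I h) (y.map (Ideal.Quotient.mk I)))) :
    IsUnit (jor h y) := by
  rwa [← jor_map, IsNilpotent.isUnit_quotient_mk_iff ⟨2, hI⟩] at hy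

theorem injOn_map_mk_jorSqrt (hI : I ^ 2 = ⊥) (h : R) (c : Matrix (Fin n) (Fin n) R) :
    Set.InjOn (fun y => y.map (Ideal.Quotient.mk I)) (jorSqrt h c) := by
  rintro y₁ ⟨hsq₁, -⟩ y₂ ⟨hsq₂, hu₂⟩ hy
  have hδ : (y₁ - y₂).map (Ideal.Quotient.mk I) = 0 := by
    rw [Matrix.map_sub _ (map_sub _), sub_eq_zero]; exact hy
  have hδδ := mul_eq_zero_of_map_mk_eq_zero hI hδ hδ
  have hjordan : y₂ * (y₁ - y₂) + (y₁ - y₂) * y₂ = y₂ * 0 + 0 * y₂ :=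
    calc y₂ * (y₁ - y₂) + (y₁ - y₂) * y₂
        = y₁ ^ 2 - y₂ ^ 2 - (y₁ - y₂) * (y₁ - y₂) := by noncomm_ring
      _ = y₂ * 0 + 0 * y₂ := by rw [hsq₁, hsq₂, hδδ]; simp
  exact sub_eq_zero.mp (injective_jordan hu₂ hjordan)

theorem surjOn_map_mk_jorSqrt (hI : I ^ 2 = ⊥) {h : R} (hh : IsUnit h)
    (c : Matrix (Fin n) (Fin n) R) :
    Set.SurjOn (fun y => y.map (Ideal.Quotient.mk I)) (jorSqrt h c)
      (jorSqrt (Ideal.Quotient.mk I h) (c.map (Ideal.Quotient.mk I))) := by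
  rintro ybar ⟨hsq, hu⟩
  obtain ⟨y₀, rfl⟩ :
      ∃ y₀ : Matrix (Fin n) (Fin n) R, y₀.map (Ideal.Quotient.mk I) = ybar :=
    ⟨.of fun i j => (Ideal.Quotient.mk_surjective (ybar i j)).choose,
      by ext i j; exact (Ideal.Quotient.mk_surjective _).choose_spec⟩
  obtain ⟨δ, hδ : y₀ * δ + δ * y₀ = c - y₀ ^ 2⟩ :=
    surjective_jordan hh (isUnit_jor_of_map_mk hI hu) (c - y₀ ^ 2)
  have hδI : δ.map (Ideal.Quotient.mk I) = 0 := by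
    refine injective_jordan hu ?_
    simp only [← RingHom.mapMatrix_apply, ← map_mul, ← map_add, hδ, map_sub,
      map_pow] at hsq ⊢
    rw [hsq, sub_self, mul_zero, zero_mul, add_zero]
  have hmap : (y₀ + δ).map (Ideal.Quotient.mk I) = y₀.map (Ideal.Quotient.mk I) := by
    rw [Matrix.map_add _ (map_add _), hδI, add_zero]
  refine ⟨y₀ + δ, ⟨?_, isUnit_jor_of_map_mk hI (hmap ▸ hu)⟩, hmap⟩
  calc (y₀ + δ) ^ 2 = y₀ ^ 2 + (y₀ * δ + δ * y₀) + δ * δ := by noncomm_ring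
    _ = c := by rw [hδ, mul_eq_zero_of_map_mk_eq_zero hI hδI hδI]; abel

theorem bijOn_map_mk_jorSqrt (hI : I ^ 2 = ⊥) {h : R} (hh : IsUnit h)
    (c : Matrix (Fin n) (Fin n) R) :
    Set.BijOn (fun y => y.map (Ideal.Quotient.mk I)) (jorSqrt h c)
      (jorSqrt (Ideal.Quotient.mk I h) (c.map (Ideal.Quotient.mk I))) :=
  ⟨mapsTo_map_jorSqrt _ h c, injOn_map_mk_jorSqrt hI h c, surjOn_map_mk_jorSqrt hI hh c⟩

end SquareRoots

section UniversalProperty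

variable {B : Type} [CommRing B] {n : ℕ} {R : Type} [CommRing R] [Algebra B R]

theorem Ymat_map_aeval (y : Matrix (Fin n) (Fin n) R) :
    (Ymat B n).map (aeval fun p => y p.1 p.2) = y := by
  ext i j
  simp [Ymat]

theorem map_jorY (half : B) (ψ : MvPolynomial (Fin n × Fin n) B →ₐ[B] R) :
    ψ (jorY B half n) = jor (algebraMap B R half) ((Ymat B n).map ψ) := by
  rw [jorY, ← AlgHom.coe_toRingHom, jor_map, AlgHom.coe_toRingHom, algHom_C]

theorem Matrix.map_algebraMap_map {A : Type} [CommRing A] [Algebra B A] (g : A →ₐ[B] R)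
    (b : Matrix (Fin n) (Fin n) B) :
    (b.map (algebraMap B A)).map g = b.map (algebraMap B R) := by
  rw [Matrix.map_map]
  exact congrArg b.map (funext g.commutes)

theorem map_sq_sub_algebraMap {A : Type} [CommRing A] [Algebra B A] (g : A →ₐ[B] R)
    (Y : Matrix (Fin n) (Fin n) A) (b : Matrix (Fin n) (Fin n) B) :
    (Y ^ 2 - b.map (algebraMap B A)).map g = (Y.map g) ^ 2 - b.map (algebraMap B R) := by
  rw [← AlgHom.coe_toRingHom, ← RingHom.mapMatrix_apply, map_sub, map_pow,
    RingHom.mapMatrix_apply, RingHom.mapMatrix_apply, AlgHom.coe_toRingHom,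
    Matrix.map_algebraMap_map]

end UniversalProperty

namespace Cquot

variable (B : Type) [CommRing B] [Invertible (2 : B)] {n : ℕ} (b : Matrix (Fin n) (Fin n) B)
  (R : Type) [CommRing R] [Algebra B R]

local notation "P" => MvPolynomial (Fin n × Fin n) B
local notation "A" => Caway B (⅟(2 : B)) n
local notation "Cq" => Cquot B (⅟(2 : B)) n b

def points : Set (Matrix (Fin n) (Fin n) R) :=
  jorSqrt (algebraMap B R ⅟2) (b.map (algebraMap B R))

variable {B R} in
theorem mapsTo_map_points {S : Type} [CommRing S] [Algebra B S] (φ : R →ₐ[B] S) :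
    Set.MapsTo (fun y => y.map φ) (points B b R) (points B b S) := by
  have h := mapsTo_map_jorSqrt (φ : R →+* S) (algebraMap B R ⅟2) (b.map (algebraMap B R))
  rwa [AlgHom.coe_toRingHom, φ.commutes, Matrix.map_algebraMap_map] at h

def genericSqrt : Matrix (Fin n) (Fin n) Cq :=
  (Ymat B n).map (algebraMap P Cq)

theorem genericSqrt_mem_points : genericSqrt B b ∈ points B b Cq := by
  constructor
  · have hrel : (((Ymat B n).map (algebraMap P A)) ^ 2 - b.map (algebraMap B A)).map
        (Ideal.Quotient.mkₐ B (relIdeal B ⅟2 n b)) = 0 := by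
      ext i j
      exact Ideal.Quotient.eq_zero_iff_mem.mpr (Ideal.subset_span ⟨(i, j), rfl⟩)
    rwa [map_sq_sub_algebraMap, Matrix.map_map, sub_eq_zero] at hrel
  · have hunit : IsUnit (algebraMap P Cq (jorY B ⅟2 n)) := by
      rw [IsScalarTower.algebraMap_apply P A Cq]
      exact (IsLocalization.Away.algebraMap_isUnit _).map _
    rwa [← IsScalarTower.coe_toAlgHom' B, map_jorY] at hunit

variable {B b R}

theorem algHom_ext_genericSqrt {f g : Cq →ₐ[B] R}
    (h : (genericSqrt B b).map f = (genericSqrt B b).map g) : f = g := by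
  apply Ideal.Quotient.algHom_ext
  apply IsLocalization.algHom_ext (Submonoid.powers (jorY B ⅟2 n))
  ext p
  exact congrFun₂ h p.1 p.2

theorem isUnit_aeval_jorY (y : points B b R) :
    IsUnit (aeval (fun p => y.1 p.1 p.2) (jorY B ⅟2 n)) := by
  rw [map_jorY, Ymat_map_aeval]
  exact y.2.2

def ofPointCaway (y : points B b R) : A →ₐ[B] R :=
  IsLocalization.Away.liftAlgHom (jorY B ⅟2 n) (isUnit_aeval_jorY y)

theorem ofPointCaway_algebraMap (y : points B b R) (p : P) :
    ofPointCaway y (algebraMap P A p) = aeval (fun p => y.1 p.1 p.2) p :=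
  IsLocalization.Away.lift_eq _ (isUnit_aeval_jorY y) p

theorem Ymat_map_ofPointCaway (y : points B b R) :
    ((Ymat B n).map (algebraMap P A)).map (ofPointCaway y) = y := by
  ext i j
  simp [Ymat, ofPointCaway_algebraMap]

theorem relIdeal_le_ker_ofPointCaway (y : points B b R) :
    relIdeal B ⅟2 n b ≤ RingHom.ker (ofPointCaway y) := by
  refine Ideal.span_le.mpr ?_
  rintro _ ⟨⟨i, j⟩, rfl⟩
  have h := congrFun₂
    (map_sq_sub_algebraMap (ofPointCaway y) ((Ymat B n).map (algebraMap P A)) b) i j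
  rwa [Ymat_map_ofPointCaway, y.2.1, sub_self] at h

def ofPoint (y : points B b R) : Cq →ₐ[B] R :=
  Ideal.Quotient.liftₐ (relIdeal B ⅟2 n b) (ofPointCaway y) fun _ ha =>
    relIdeal_le_ker_ofPointCaway y ha

theorem ofPoint_genericSqrt (y : points B b R) : (genericSqrt B b).map (ofPoint y) = y := by
  rw [← Ymat_map_ofPointCaway y, Matrix.map_map, genericSqrt, Matrix.map_map]
  rfl

variable (B b R) in
def homEquiv : (Cq →ₐ[B] R) ≃ points B b R where
  toFun f := ⟨(genericSqrt B b).map f, mapsTo_map_points b f (genericSqrt_mem_points B b)⟩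
  invFun := ofPoint
  left_inv _ := algHom_ext_genericSqrt (ofPoint_genericSqrt _)
  right_inv y := Subtype.ext (ofPoint_genericSqrt y)

theorem bijOn_map_mk_points {D : Type} [CommRing D] [Algebra B D] {I : Ideal D}
    (hI : I ^ 2 = ⊥) :
    Set.BijOn (fun y => y.map (Ideal.Quotient.mk I)) (points B b D) (points B b (D ⧸ I)) :=
  bijOn_map_mk_jorSqrt hI ((isUnit_of_invertible _).map _) _

end Cquot

theorem stmt3_general (B : Type) [CommRing B] [Invertible (2 : B)] (n : ℕ)
    (b : Matrix (Fin n) (Fin n) B)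
    (D : Type) [CommRing D] [Algebra B D] (I : Ideal D) (hI : I ^ 2 = ⊥) :
    Function.Bijective
      (fun f : Cquot B (⅟(2 : B)) n b →ₐ[B] D => (Ideal.Quotient.mkₐ B I).comp f) := by
  have hred := Cquot.bijOn_map_mk_points (b := b) hI
  have hfactor :
      (fun f : Cquot B (⅟(2 : B)) n b →ₐ[B] D => (Ideal.Quotient.mkₐ B I).comp f) =
        (Cquot.homEquiv B b (D ⧸ I)).symm ∘ hred.mapsTo.restrict _ _ _ ∘
          Cquot.homEquiv B b D := by
    funext f
    rw [Function.comp_apply, Equiv.eq_symm_apply]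
    exact Subtype.ext Matrix.map_map.symm
  rw [hfactor]
  exact (Equiv.bijective _).comp (hred.bijective.comp (Equiv.bijective _))

/-- For `B` a commutative ring with `2` invertible and `b ∈ GLₙ(B)`,
`C = B[y, jor(y)⁻¹]/(y² − b)` is formally étale over `B`: for every commutative
`B`-algebra `D` and square-zero ideal `I ⊆ D`, every `B`-algebra map `C → D/I`
lifts uniquely to a `B`-algebra map `C → D`. -/
theorem stmt3 (B : Type) [CommRing B] [Invertible (2 : B)] (n : ℕ)
    (b : Matrix (Fin n) (Fin n) B) (hb : IsUnit b)
    (D : Type) [CommRing D] [Algebra B D] (I : Ideal D) (hI : I ^ 2 = ⊥) :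
    Function.Bijective
      (fun f : Cquot B (⅟(2 : B)) n b →ₐ[B] D => (Ideal.Quotient.mkₐ B I).comp f) :=
  stmt3_general B n b D I hI
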